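/- Let M^0 = [[0, 1/8, 2, 5/6], [−8, −2, 0, −2], [−1/2, −1/8, 0, −1/8], [0, 1/2, 8, −2]] and M^1 = (i/√3) · [[0, 1, 0, 0], [0, 0, 0, 0], [0, 0, 0, 1], [0, 0, 0, 0]] be the 4×4 complex matrices defining the new exact scar state |Ω⟩ of the PXP chain in the spin-1/2 basis. Then for every n > 3 and every Rydberg-allowed cyclic word s : ZMod n → {0, 1}, Σ_{k ∈ ZMod n} Tr(F^{s_k} · M^{s_{k+1}} ⋯ M^{s_{k+n−1}}) = 0. (Hence |Ω⟩ is an exact E = 0 eigenstate of the periodic PXP chain of any length n > 3, even or odd.) -/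

import Mathlib

/-!
With the gauge matrix `C = (i/√3) • B` one has `F⁰ = [C, M⁰]` exactly and
`M⁰ F¹ M⁰ = M⁰ [C, M¹] M⁰`, so `Mᵃ Fᵇ Mᶜ = Mᵃ [C, Mᵇ] Mᶜ` on every Rydberg-allowed triple.
For `n ≥ 3` the word following the defect at site `k` starts at site `k + 1` and ends at
site `k - 1`, so by cyclicity of the trace the insertion amplitude at `k` equals
`Tr ([C, M^{s k}] M^{s (k+1)} ⋯ M^{s (k-1)}) = Tr (C Q k) - Tr (C Q (k + 1))`, where `Q k` is
the full cyclic product read from site `k`. The sum over `k` telescopes.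
-/

open Matrix

/-- The spin-1/2-basis MPS tensors of the new exact scar state `|Ω⟩`
of the PXP chain: `M^0` and `M^1 = (i/√3)·[...]`. -/
noncomputable def MOmega : Fin 2 → Matrix (Fin 4) (Fin 4) ℂ :=
  ![!![0, 1/8, 2, 5/6; -8, -2, 0, -2; -1/2, -1/8, 0, -1/8; 0, 1/2, 8, -2],
    (Complex.I / (Real.sqrt 3 : ℂ)) •
      !![0, 1, 0, 0; 0, 0, 0, 0; 0, 0, 0, 1; 0, 0, 0, 0]]

/-- The defect matrices: `F^0 = M^1`, `F^1 = M^0`. -/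
noncomputable def FOmega : Fin 2 → Matrix (Fin 4) (Fin 4) ℂ :=
  ![MOmega 1, MOmega 0]

section SegmentProd

variable {A α : Type*} [AddCommMonoidWithOne A] [Monoid α] (f : A → α)

def segmentProd (k : A) (len : ℕ) : α :=
  (List.ofFn fun j : Fin len => f (k + (j : ℕ))).prod

theorem segmentProd_succ (k : A) (len : ℕ) :
    segmentProd f k (len + 1) = f k * segmentProd f (k + 1) len := by
  simp only [segmentProd, List.ofFn_succ, List.prod_cons, Fin.val_zero, Fin.val_succ,
    Nat.cast_zero, add_zero, Nat.cast_succ, add_assoc, add_comm (1 : A)]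

theorem segmentProd_succ' (k : A) (len : ℕ) :
    segmentProd f k (len + 1) = segmentProd f k len * f (k + len) := by
  simp only [segmentProd, List.ofFn_succ', List.prod_concat, Fin.val_castSucc, Fin.val_last]

end SegmentProd

theorem ZMod.natCast_self_sub {n c : ℕ} (hc : c ≤ n) : ((n - c : ℕ) : ZMod n) = -c := by
  rw [Nat.cast_sub hc, ZMod.natCast_self, zero_sub]

section CyclicSegment

variable {n : ℕ} [NeZero n] {α : Type*} [Monoid α] (f : ZMod n → α) (k : ZMod n)

theorem segmentProd_sub_one_add_one :
    segmentProd f k n = segmentProd f k (n - 1 + 1) :=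
  congrArg (segmentProd f k) (Nat.sub_add_cancel NeZero.one_le).symm

theorem mul_segmentProd_sub_one : f k * segmentProd f (k + 1) (n - 1) = segmentProd f k n := by
  rw [segmentProd_sub_one_add_one, segmentProd_succ]

theorem segmentProd_sub_one_mul :
    segmentProd f (k + 1) (n - 1) * f k = segmentProd f (k + 1) n := by
  rw [segmentProd_sub_one_add_one, segmentProd_succ', ZMod.natCast_self_sub NeZero.one_le,
    Nat.cast_one, add_neg_cancel_right]

omit [NeZero n] in
theorem segmentProd_sub_one_eq (hn : 3 ≤ n) :
    segmentProd f (k + 1) (n - 1) = f (k + 1) * segmentProd f (k + 2) (n - 3) * f (k - 1) := by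
  rw [show n - 1 = n - 3 + 1 + 1 by omega, segmentProd_succ, segmentProd_succ', mul_assoc,
    add_assoc, one_add_one_eq_two, ZMod.natCast_self_sub hn]
  congr 3
  ring

end CyclicSegment

theorem Matrix.trace_mul_eq_of_sandwich {R m : Type*} [CommSemiring R] [Fintype m]
    {F G X Y : Matrix m m R} (h : X * F * Y = X * G * Y) (Z : Matrix m m R) :
    trace (F * (Y * Z * X)) = trace (G * (Y * Z * X)) := by
  have key : ∀ F : Matrix m m R, trace (F * (Y * Z * X)) = trace (X * F * Y * Z) := fun F => by
    rw [← mul_assoc, trace_mul_comm]; simp only [mul_assoc]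
  rw [key, key, h]

section Insertion

variable {R m : Type*} [CommRing R] [Fintype m] [DecidableEq m] {n : ℕ} [NeZero n]
  (A F : ZMod n → Matrix m m R) (C : Matrix m m R)

theorem trace_mul_segmentProd_eq_sub (hn : 3 ≤ n) (k : ZMod n)
    (hk : A (k - 1) * F k * A (k + 1) = A (k - 1) * (C * A k - A k * C) * A (k + 1)) :
    trace (F k * segmentProd A (k + 1) (n - 1)) =
      trace (C * segmentProd A k n) - trace (C * segmentProd A (k + 1) n) := by
  set P := segmentProd A (k + 1) (n - 1) with hP
  calc trace (F k * P) = trace ((C * A k - A k * C) * P) := by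
        rw [hP, segmentProd_sub_one_eq A k hn, trace_mul_eq_of_sandwich hk]
    _ = trace (C * (A k * P)) - trace (C * (P * A k)) := by
        rw [sub_mul, trace_sub, mul_assoc, mul_assoc, trace_mul_comm (A k), mul_assoc]
    _ = trace (C * segmentProd A k n) - trace (C * segmentProd A (k + 1) n) := by
        rw [mul_segmentProd_sub_one, segmentProd_sub_one_mul]

theorem sum_trace_mul_segmentProd_eq_zero (hn : 3 ≤ n)
    (hF : ∀ k, A (k - 1) * F k * A (k + 1) = A (k - 1) * (C * A k - A k * C) * A (k + 1)) :
    ∑ k, trace (F k * segmentProd A (k + 1) (n - 1)) = 0 := by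
  simp only [fun k => trace_mul_segmentProd_eq_sub A F C hn k (hF k), Finset.sum_sub_distrib]
  exact sub_eq_zero.mpr (Fintype.sum_equiv (Equiv.addRight 1) _ _ fun _ => rfl).symm

end Insertion

theorem Matrix.mul_fin_four {α : Type*} [AddCommMonoid α] [Mul α]
    (a₁₁ a₁₂ a₁₃ a₁₄ a₂₁ a₂₂ a₂₃ a₂₄ a₃₁ a₃₂ a₃₃ a₃₄ a₄₁ a₄₂ a₄₃ a₄₄
     b₁₁ b₁₂ b₁₃ b₁₄ b₂₁ b₂₂ b₂₃ b₂₄ b₃₁ b₃₂ b₃₃ b₃₄ b₄₁ b₄₂ b₄₃ b₄₄ : α) :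
    !![a₁₁, a₁₂, a₁₃, a₁₄; a₂₁, a₂₂, a₂₃, a₂₄; a₃₁, a₃₂, a₃₃, a₃₄; a₄₁, a₄₂, a₄₃, a₄₄] *
      !![b₁₁, b₁₂, b₁₃, b₁₄; b₂₁, b₂₂, b₂₃, b₂₄; b₃₁, b₃₂, b₃₃, b₃₄; b₄₁, b₄₂, b₄₃, b₄₄] =
    !![a₁₁*b₁₁ + a₁₂*b₂₁ + a₁₃*b₃₁ + a₁₄*b₄₁, a₁₁*b₁₂ + a₁₂*b₂₂ + a₁₃*b₃₂ + a₁₄*b₄₂,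
       a₁₁*b₁₃ + a₁₂*b₂₃ + a₁₃*b₃₃ + a₁₄*b₄₃, a₁₁*b₁₄ + a₁₂*b₂₄ + a₁₃*b₃₄ + a₁₄*b₄₄;
       a₂₁*b₁₁ + a₂₂*b₂₁ + a₂₃*b₃₁ + a₂₄*b₄₁, a₂₁*b₁₂ + a₂₂*b₂₂ + a₂₃*b₃₂ + a₂₄*b₄₂,
       a₂₁*b₁₃ + a₂₂*b₂₃ + a₂₃*b₃₃ + a₂₄*b₄₃, a₂₁*b₁₄ + a₂₂*b₂₄ + a₂₃*b₃₄ + a₂₄*b₄₄;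
       a₃₁*b₁₁ + a₃₂*b₂₁ + a₃₃*b₃₁ + a₃₄*b₄₁, a₃₁*b₁₂ + a₃₂*b₂₂ + a₃₃*b₃₂ + a₃₄*b₄₂,
       a₃₁*b₁₃ + a₃₂*b₂₃ + a₃₃*b₃₃ + a₃₄*b₄₃, a₃₁*b₁₄ + a₃₂*b₂₄ + a₃₃*b₃₄ + a₃₄*b₄₄;
       a₄₁*b₁₁ + a₄₂*b₂₁ + a₄₃*b₃₁ + a₄₄*b₄₁, a₄₁*b₁₂ + a₄₂*b₂₂ + a₄₃*b₃₂ + a₄₄*b₄₂,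
       a₄₁*b₁₃ + a₄₂*b₂₃ + a₄₃*b₃₃ + a₄₄*b₄₃, a₄₁*b₁₄ + a₄₂*b₂₄ + a₄₃*b₃₄ + a₄₄*b₄₄] :=
  (mulᵣ_eq _ _).symm

namespace OmegaScar

noncomputable def scale : ℂ := Complex.I / (Real.sqrt 3 : ℂ)

def E : Matrix (Fin 4) (Fin 4) ℂ := !![0, 1, 0, 0; 0, 0, 0, 0; 0, 0, 0, 1; 0, 0, 0, 0]

noncomputable def B : Matrix (Fin 4) (Fin 4) ℂ :=
  !![3/2, 17/32, -7/2, 7/16; -6, -3/2, 12, 1/2; 3/8, -3/64, 0, -5/32; -3, -9/8, 6, 0]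

noncomputable def gauge : Matrix (Fin 4) (Fin 4) ℂ := scale • B

theorem scale_mul_self : scale * scale = -(1 / 3) := by
  have h3 : (Real.sqrt 3 : ℂ) * (Real.sqrt 3 : ℂ) = 3 := by
    norm_cast; exact Real.mul_self_sqrt (by norm_num)
  rw [scale, div_mul_div_comm, Complex.I_mul_I, h3]
  norm_num

theorem MOmega_one_eq : MOmega 1 = scale • E := rfl

theorem B_mul_MOmega_zero_sub : B * MOmega 0 - MOmega 0 * B = E := by
  simp only [MOmega, B, E, Matrix.cons_val_zero, mul_fin_four, of_sub_of, cons_sub_cons,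
    empty_sub_empty]
  norm_num

theorem MOmega_zero_mul_commutator_B_E_mul :
    MOmega 0 * (B * E - E * B) * MOmega 0 = (-3 : ℂ) • (MOmega 0 * MOmega 0 * MOmega 0) := by
  simp only [MOmega, B, E, Matrix.cons_val_zero, mul_fin_four, of_sub_of, cons_sub_cons,
    empty_sub_empty, smul_of, smul_cons, smul_empty]
  norm_num

theorem FOmega_zero_eq_commutator : FOmega 0 = gauge * MOmega 0 - MOmega 0 * gauge := by
  rw [show FOmega 0 = scale • E from rfl, ← B_mul_MOmega_zero_sub, gauge, smul_sub,
    smul_mul_assoc, mul_smul_comm]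

theorem MOmega_zero_mul_FOmega_one_mul_eq_commutator :
    MOmega 0 * FOmega 1 * MOmega 0 =
      MOmega 0 * (gauge * MOmega 1 - MOmega 1 * gauge) * MOmega 0 := by
  rw [show FOmega 1 = MOmega 0 from rfl, MOmega_one_eq, gauge, smul_mul_smul, smul_mul_smul,
    ← smul_sub, mul_smul_comm, smul_mul_assoc, MOmega_zero_mul_commutator_B_E_mul, smul_smul,
    scale_mul_self]
  norm_num

theorem MOmega_mul_FOmega_mul_eq_commutator (a b c : Fin 2) (hab : ¬(a = 1 ∧ b = 1))
    (hbc : ¬(b = 1 ∧ c = 1)) :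
    MOmega a * FOmega b * MOmega c =
      MOmega a * (gauge * MOmega b - MOmega b * gauge) * MOmega c := by
  obtain rfl | rfl : b = 0 ∨ b = 1 := by omega
  · rw [FOmega_zero_eq_commutator]
  · obtain rfl : a = 0 := by omega
    obtain rfl : c = 0 := by omega
    exact MOmega_zero_mul_FOmega_one_mul_eq_commutator

end OmegaScar

/-- for the `|Ω⟩` MPS tensors, the cyclic insertion sum vanishes
on every Rydberg-allowed cyclic word of length `n > 3` (even or odd), hence
`|Ω⟩` is an exact `E = 0` eigenstate of the periodic PXP chain. -/
theorem Omega_cyclic_insertion_sum_eq_zero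
    (n : ℕ) [NeZero n] (hn : 3 < n)
    (s : ZMod n → Fin 2)
    (hallow : ¬ ∃ k : ZMod n, s k = 1 ∧ s (k + 1) = 1) :
    ∑ k : ZMod n,
      Matrix.trace (FOmega (s k) *
        (List.ofFn fun j : Fin (n - 1) =>
          MOmega (s (k + 1 + ((j : ℕ) : ZMod n)))).prod) = 0 := by
  have hallowed (k : ZMod n) : ¬(s k = 1 ∧ s (k + 1) = 1) := fun h => hallow ⟨k, h⟩
  refine sum_trace_mul_segmentProd_eq_zero (fun k => MOmega (s k)) (fun k => FOmega (s k))
    OmegaScar.gauge hn.le fun k =>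
      OmegaScar.MOmega_mul_FOmega_mul_eq_commutator _ _ _ ?_ (hallowed k)
  simpa using hallowed (k - 1)
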